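/- arXiv:2107.04543 — 4 statements merged into one kernel-verified Lean document; each statement's English description precedes it below -/
import Mathlib

section
/- For every β > 0 and h > 0, the equation K = Σ_{ℓ=1}^k a_ℓ ω_ℓ tanh(β(a_ℓ K + h)) has exactly one strictly positive solution K. -/
open Real Finset

lemma tanh_fun_eq : Real.tanh = fun x => Real.sinh x / Real.cosh x :=
  funext fun x => Real.tanh_eq_sinh_div_cosh x

lemma continuous_tanh' : Continuous Real.tanh := by
  rw [tanh_fun_eq]
  exact Real.continuous_sinh.div Real.continuous_cosh fun x => (Real.cosh_pos x).ne'

lemma tanh_lt_one' (x : ℝ) : Real.tanh x < 1 := by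
  rw [Real.tanh_eq_sinh_div_cosh, div_lt_one (Real.cosh_pos x)]
  exact Real.sinh_lt_cosh x

lemma tanh_pos' {x : ℝ} (hx : 0 < x) : 0 < Real.tanh x := by
  rw [Real.tanh_eq_sinh_div_cosh]
  exact div_pos (by rwa [Real.sinh_pos_iff]) (Real.cosh_pos x)

lemma abs_tanh_lt_one' (x : ℝ) : |Real.tanh x| < 1 := by
  rw [abs_lt]
  refine ⟨?_, tanh_lt_one' x⟩
  have := tanh_lt_one' (-x)
  rw [Real.tanh_neg] at this
  linarith

lemma hasDerivAt_tanh' (x : ℝ) :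
    HasDerivAt Real.tanh (1 - Real.tanh x ^ 2) x := by
  have hc := (Real.cosh_pos x).ne'
  have h := (Real.hasDerivAt_sinh x).div (Real.hasDerivAt_cosh x) hc
  rw [tanh_fun_eq]
  convert h using 1
  show 1 - (Real.sinh x / Real.cosh x) ^ 2 = _
  have h1 := Real.cosh_sq_sub_sinh_sq x
  field_simp
  all_goals rfl

lemma tanh_concaveOn : ConcaveOn ℝ (Set.Ici (0:ℝ)) Real.tanh := by
  refine concaveOn_of_hasDerivWithinAt2_nonpos (f' := fun x => 1 - Real.tanh x ^ 2)
    (f'' := fun x => -(2 * Real.tanh x ^ 1 * (1 - Real.tanh x ^ 2)))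
    (convex_Ici 0) continuous_tanh'.continuousOn
    (fun x _ => (hasDerivAt_tanh' x).hasDerivWithinAt)
    (fun x _ => ?_) (fun x hx => ?_)
  · exact (((hasDerivAt_tanh' x).pow 2).const_sub 1).hasDerivWithinAt
  · rw [interior_Ici, Set.mem_Ioi] at hx
    have h1 : 0 < Real.tanh x := tanh_pos' hx
    have h2 : Real.tanh x ^ 2 < 1 := by
      have := abs_tanh_lt_one' x
      nlinarith [abs_nonneg (Real.tanh x), sq_abs (Real.tanh x)]
    simp only [pow_one]
    nlinarith

theorem stmt_0 (k : ℕ) (a ω : Fin k → ℝ)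
    (ha : ∀ ℓ, 0 ≤ a ℓ) (ha' : ∃ ℓ, a ℓ ≠ 0)
    (hω : ∀ ℓ, ω ℓ ∈ Set.Ioo (0:ℝ) 1) (hωsum : ∑ ℓ, ω ℓ = 1)
    (β h : ℝ) (hβ : 0 < β) (hh : 0 < h) :
    ∃! K : ℝ, 0 < K ∧
      K = ∑ ℓ, a ℓ * ω ℓ * Real.tanh (β * (a ℓ * K + h)) := by
  obtain ⟨ℓ₀, hℓ₀⟩ := ha'
  have haω : ∀ ℓ, 0 ≤ a ℓ * ω ℓ := fun ℓ => mul_nonneg (ha ℓ) (hω ℓ).1.le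
  set T : ℝ → ℝ := fun K => ∑ ℓ, a ℓ * ω ℓ * Real.tanh (β * (a ℓ * K + h)) with hT
  have hTcont : Continuous T := by
    apply continuous_finset_sum
    intro ℓ _
    exact continuous_const.mul (continuous_tanh'.comp (by continuity))
  have hβh : 0 < Real.tanh (β * h) := tanh_pos' (mul_pos hβ hh)
  have hT0 : 0 < T 0 := by
    apply Finset.sum_pos'
    · intro ℓ _
      exact mul_nonneg (haω ℓ) (tanh_pos' (by nlinarith [ha ℓ])).le
    · refine ⟨ℓ₀, Finset.mem_univ _, ?_⟩
      have ha0 : 0 < a ℓ₀ := lt_of_le_of_ne (ha ℓ₀) (Ne.symm hℓ₀)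
      exact mul_pos (mul_pos ha0 (hω ℓ₀).1) (tanh_pos' (by nlinarith))
  set S : ℝ := ∑ ℓ, a ℓ * ω ℓ with hS
  have hSpos : 0 < S := by
    apply Finset.sum_pos' (fun ℓ _ => haω ℓ) ⟨ℓ₀, Finset.mem_univ _, ?_⟩
    exact mul_pos (lt_of_le_of_ne (ha ℓ₀) (Ne.symm hℓ₀)) (hω ℓ₀).1
  have hTS : T S ≤ S := by
    rw [hS]
    apply Finset.sum_le_sum
    intro ℓ _
    calc a ℓ * ω ℓ * Real.tanh (β * (a ℓ * S + h)) ≤ a ℓ * ω ℓ * 1 :=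
          mul_le_mul_of_nonneg_left (tanh_lt_one' _).le (haω ℓ)
      _ = a ℓ * ω ℓ := mul_one _
  -- existence via IVT
  have hIVT : (0:ℝ) ∈ (fun K => T K - K) '' Set.Icc 0 S := by
    apply intermediate_value_Icc' hSpos.le ((hTcont.sub continuous_id).continuousOn)
    constructor
    · simpa using hTS
    · simpa using hT0.le
  obtain ⟨K, hKmem, hK⟩ := hIVT
  have hKfix : K = T K := by dsimp at hK; linarith
  have hKpos : 0 < K := by
    rcases lt_or_eq_of_le hKmem.1 with h' | h'
    · exact h'
    · exfalso; rw [← h'] at hKfix; linarith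
  -- uniqueness: no two distinct positive fixed points
  have key : ∀ K₁ K₂ : ℝ, 0 < K₁ → K₁ = T K₁ → 0 < K₂ → K₂ = T K₂ → ¬ K₁ < K₂ := by
    intro K₁ K₂ h₁ hfix₁ h₂ hfix₂ hlt
    set lam : ℝ := (K₂ - K₁) / K₂ with hlam
    have hlam0 : 0 < lam := div_pos (by linarith) h₂
    have hlam1 : lam + (1 - lam) = 1 := by ring
    have h1lam : 0 ≤ 1 - lam := by
      rw [hlam]; rw [sub_nonneg, div_le_one h₂]; linarith
    have hconc : ∀ ℓ : Fin k,
        lam * Real.tanh (β * h) + (1 - lam) * Real.tanh (β * (a ℓ * K₂ + h))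
          ≤ Real.tanh (β * (a ℓ * K₁ + h)) := by
      intro ℓ
      have hx : β * h ∈ Set.Ici (0:ℝ) := Set.mem_Ici.2 (by positivity)
      have hy : β * (a ℓ * K₂ + h) ∈ Set.Ici (0:ℝ) := Set.mem_Ici.2 (by
        have := mul_nonneg (ha ℓ) h₂.le; nlinarith)
      have := tanh_concaveOn.2 hx hy hlam0.le h1lam hlam1
      have harg : lam • (β * h) + (1 - lam) • (β * (a ℓ * K₂ + h))
          = β * (a ℓ * K₁ + h) := by
        simp only [smul_eq_mul, hlam]
        field_simp
        ring
      rw [harg] at this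
      simpa using this
    have hsum : ∑ ℓ, a ℓ * ω ℓ *
        (lam * Real.tanh (β * h) + (1 - lam) * Real.tanh (β * (a ℓ * K₂ + h)))
          ≤ T K₁ := by
      apply Finset.sum_le_sum
      intro ℓ _
      exact mul_le_mul_of_nonneg_left (hconc ℓ) (haω ℓ)
    have hexp : ∑ ℓ, a ℓ * ω ℓ *
        (lam * Real.tanh (β * h) + (1 - lam) * Real.tanh (β * (a ℓ * K₂ + h)))
          = lam * T 0 + (1 - lam) * T K₂ := by
      rw [hT]
      rw [Finset.mul_sum, Finset.mul_sum, ← Finset.sum_add_distrib]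
      apply Finset.sum_congr rfl
      intro ℓ _
      have : a ℓ * 0 = 0 := mul_zero _
      rw [this, zero_add]
      ring
    rw [hexp] at hsum
    have hT0' : 0 < T 0 := hT0
    have hK2 : (1 - lam) * T K₂ = K₁ := by
      rw [← hfix₂, hlam]
      field_simp
      ring
    rw [hK2] at hsum
    rw [← hfix₁] at hsum
    nlinarith
  refine ⟨K, ⟨hKpos, by rw [hT] at hKfix; exact hKfix⟩, ?_⟩
  rintro K' ⟨hK'pos, hK'fix⟩
  have hK'fix' : K' = T K' := hK'fix
  rcases lt_trichotomy K' K with hlt | heq | hgt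
  · exact absurd hlt (key K' K hK'pos hK'fix' hKpos hKfix)
  · exact heq
  · exact absurd hgt (key K K' hKpos hKfix hK'pos hK'fix')
end

section
/- If there exists K̄ < 0 satisfying K̄ > T(K̄) with T'(K̄) = 1, then necessarily h < (max_ℓ a_ℓ) · Σ_{ℓ=1}^k a_ℓ ω_ℓ; that is, for h ≥ (max_ℓ a_ℓ) Σ_ℓ a_ℓ ω_ℓ the metastability condition fails. -/
open Real Finset

/-- The fixed-point map `T_{β,h,𝒫}`. -/
noncomputable def T (k : ℕ) (a ω : Fin k → ℝ) (β h K : ℝ) : ℝ :=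
  ∑ ℓ, a ℓ * ω ℓ * Real.tanh (β * (a ℓ * K + h))

lemma neg_one_lt_tanh' (x : ℝ) : -1 < Real.tanh x := by
  rw [Real.tanh_eq_sinh_div_cosh, neg_lt, ← neg_div, div_lt_one (Real.cosh_pos x), neg_lt]
  nlinarith [Real.sinh_add_cosh x, Real.exp_pos x]

lemma tanh_nonneg' {x : ℝ} (hx : 0 ≤ x) : 0 ≤ Real.tanh x := by
  rw [Real.tanh_eq_sinh_div_cosh]
  exact div_nonneg (Real.sinh_nonneg_iff.2 hx) (Real.cosh_pos x).le

theorem stmt_7 (k : ℕ) (a ω : Fin k → ℝ)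
    (ha : ∀ ℓ, 0 < a ℓ)
    (hω : ∀ ℓ, ω ℓ ∈ Set.Ioo (0:ℝ) 1) (hωsum : ∑ ℓ, ω ℓ = 1)
    (β h : ℝ) (hβ : 0 < β) (hh : 0 < h)
    (amax : ℝ) (hmax : ∀ ℓ, a ℓ ≤ amax) (hmax' : ∃ ℓ, a ℓ = amax)
    (hKb : ∃ Kb : ℝ, Kb < 0 ∧ T k a ω β h Kb < Kb ∧
      β * ∑ ℓ, (a ℓ)^2 * ω ℓ * (1 - Real.tanh (β * (a ℓ * Kb + h))^2) = 1) :
    h < amax * ∑ ℓ, a ℓ * ω ℓ := by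
  obtain ⟨Kb, hKneg, hTK, _⟩ := hKb
  by_contra hcon
  push_neg at hcon
  -- k must be nonzero
  rcases Nat.eq_zero_or_pos k with hk | hk
  · subst hk
    simp [T] at hTK
    linarith
  have hne : (univ : Finset (Fin k)).Nonempty := by haveI : NeZero k := ⟨hk.ne'⟩; exact univ_nonempty
  set S := ∑ ℓ, a ℓ * ω ℓ with hS
  -- T(Kb) > -S
  have hTlb : -S < T k a ω β h Kb := by
    rw [hS, ← Finset.sum_neg_distrib]
    apply Finset.sum_lt_sum_of_nonempty hne
    intro ℓ _
    have hpos : 0 < a ℓ * ω ℓ := mul_pos (ha ℓ) (hω ℓ).1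
    have := neg_one_lt_tanh' (β * (a ℓ * Kb + h))
    nlinarith
  have hKS : -S < Kb := lt_trans hTlb hTK
  -- each argument is nonneg
  have hTpos : 0 ≤ T k a ω β h Kb := by
    apply Finset.sum_nonneg
    intro ℓ _
    have harg : 0 ≤ β * (a ℓ * Kb + h) := by
      apply mul_nonneg hβ.le
      have h1 : a ℓ * (-Kb) ≤ amax * (-Kb) :=
        mul_le_mul_of_nonneg_right (hmax ℓ) (by linarith)
      have h2 : amax * (-Kb) ≤ amax * S := by
        obtain ⟨j, hj⟩ := hmax'
        have : 0 < amax := hj ▸ ha j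
        nlinarith
      linarith
    exact mul_nonneg (mul_nonneg (ha ℓ).le (hω ℓ).1.le) (tanh_nonneg' harg)
  linarith
end

section
/- The stationary points of the free energy F(m) = −(1/2)(Σ_ℓ a_ℓ ω_ℓ m_ℓ)² − h Σ_ℓ ω_ℓ m_ℓ + (1/β) Σ_ℓ ω_ℓ I_C(m_ℓ) on (−1,1)^k, where I_C(x) = ((1−x)/2)log((1−x)/2) + ((1+x)/2)log((1+x)/2), are exactly the points m satisfying m_ℓ = tanh(β(a_ℓ Σ_{ℓ'} a_{ℓ'} ω_{ℓ'} m_{ℓ'} + h)) for every ℓ. -/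
open Real Finset

/-- The Cramér entropy. -/
noncomputable def IC (x : ℝ) : ℝ :=
  (1 - x) / 2 * Real.log ((1 - x) / 2) + (1 + x) / 2 * Real.log ((1 + x) / 2)

/-- The limiting free energy `F_{β,h}`. -/
noncomputable def F (k : ℕ) (a ω : Fin k → ℝ) (β h : ℝ) (m : Fin k → ℝ) : ℝ :=
  -(1/2) * (∑ ℓ, a ℓ * ω ℓ * m ℓ)^2 - h * ∑ ℓ, ω ℓ * m ℓ +
    (1/β) * ∑ ℓ, ω ℓ * IC (m ℓ)

lemma tanh_formula (y : ℝ) : Real.tanh y = (Real.exp (2*y) - 1)/(Real.exp (2*y) + 1) := by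
  have h1 : Real.exp y ≠ 0 := Real.exp_ne_zero y
  have h2 : (0:ℝ) < Real.exp (2*y) + 1 := by positivity
  have h3 : (0:ℝ) < Real.exp y + Real.exp (-y) := by positivity
  rw [Real.tanh_eq_sinh_div_cosh, Real.sinh_eq, Real.cosh_eq]
  rw [div_eq_div_iff (by positivity) (ne_of_gt h2)]
  have : Real.exp (2*y) = Real.exp y * Real.exp y := by rw [← Real.exp_add]; ring_nf
  have hinv : Real.exp y * Real.exp (-y) = 1 := by rw [← Real.exp_add]; simp
  rw [this]; nlinarith [hinv]

lemma tanh_L (x : ℝ) (h1 : -1 < x) (h2 : x < 1) :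
    Real.tanh ((1/2) * Real.log ((1+x)/(1-x))) = x := by
  have hx1 : (0:ℝ) < 1 + x := by linarith
  have hx2 : (0:ℝ) < 1 - x := by linarith
  have hr : (0:ℝ) < (1+x)/(1-x) := by positivity
  rw [tanh_formula]
  have : 2 * ((1/2) * Real.log ((1+x)/(1-x))) = Real.log ((1+x)/(1-x)) := by ring
  rw [this, Real.exp_log hr]
  field_simp
  ring

lemma L_tanh (y : ℝ) : (1/2) * Real.log ((1 + Real.tanh y)/(1 - Real.tanh y)) = y := by
  have h2 : (0:ℝ) < Real.exp (2*y) + 1 := by positivity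
  have he : (0:ℝ) < Real.exp (2*y) := Real.exp_pos _
  rw [tanh_formula]
  have ha : 1 + (Real.exp (2*y) - 1)/(Real.exp (2*y) + 1) = 2 * Real.exp (2*y) / (Real.exp (2*y) + 1) := by
    field_simp; ring
  have hb : 1 - (Real.exp (2*y) - 1)/(Real.exp (2*y) + 1) = 2 / (Real.exp (2*y) + 1) := by
    field_simp; norm_num
  rw [ha, hb]
  have hc : 2 * Real.exp (2*y) / (Real.exp (2*y) + 1) / (2 / (Real.exp (2*y) + 1)) = Real.exp (2*y) := by
    field_simp
  rw [hc, Real.log_exp]; ring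

lemma IC_deriv (x : ℝ) (h1 : -1 < x) (h2 : x < 1) :
    HasDerivAt IC ((1/2) * Real.log ((1+x)/(1-x))) x := by
  have hx1 : (0:ℝ) < 1 + x := by linarith
  have hx2 : (0:ℝ) < 1 - x := by linarith
  have hA : ((1 - x)/2 : ℝ) ≠ 0 := by positivity
  have hB : ((1 + x)/2 : ℝ) ≠ 0 := by positivity
  have d1 : HasDerivAt (fun x : ℝ => (1 - x)/2) (-(1/2)) x := by
    have := ((hasDerivAt_id x).const_sub 1).div_const 2
    exact this.congr_deriv (by norm_num)
  have d2 : HasDerivAt (fun x : ℝ => (1 + x)/2) (1/2) x := by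
    have := ((hasDerivAt_id x).const_add 1).div_const 2
    exact this
  have l1 : HasDerivAt (fun x : ℝ => Real.log ((1 - x)/2)) ((-(1/2))/((1 - x)/2)) x := d1.log hA
  have l2 : HasDerivAt (fun x : ℝ => Real.log ((1 + x)/2)) ((1/2)/((1 + x)/2)) x := d2.log hB
  have p1 := d1.mul l1
  have p2 := d2.mul l2
  have := p1.add p2
  refine this.congr_deriv (Eq.symm ?_)
  rw [show (1+x)/(1-x) = ((1+x)/2)/((1-x)/2) by field_simp, Real.log_div hB hA]
  field_simp
  ring

lemma sum_update_eq {k : ℕ} (m : Fin k → ℝ) (ℓ : Fin k) (t : ℝ) (g : Fin k → ℝ → ℝ) :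
    ∑ i, g i (Function.update m ℓ t i) =
      g ℓ t + ∑ i ∈ Finset.univ.erase ℓ, g i (m i) := by
  rw [← Finset.add_sum_erase _ (fun i => g i (Function.update m ℓ t i)) (Finset.mem_univ ℓ)]
  congr 1
  · simp
  · exact Finset.sum_congr rfl fun i hi => by
      rw [Function.update_of_ne (Finset.ne_of_mem_erase hi)]

theorem stmt_11 (k : ℕ) (a ω : Fin k → ℝ)
    (ha : ∀ ℓ, 0 ≤ a ℓ)
    (hω : ∀ ℓ, ω ℓ ∈ Set.Ioo (0:ℝ) 1) (hωsum : ∑ ℓ, ω ℓ = 1)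
    (β h : ℝ) (hβ : 0 < β) (hh : 0 ≤ h)
    (m : Fin k → ℝ) (hm : ∀ ℓ, m ℓ ∈ Set.Ioo (-1:ℝ) 1) :
    (∀ ℓ, HasDerivAt (fun t : ℝ => F k a ω β h (Function.update m ℓ t)) 0 (m ℓ)) ↔
    (∀ ℓ, m ℓ = Real.tanh (β * (a ℓ * (∑ ℓ', a ℓ' * ω ℓ' * m ℓ') + h))) := by
  set S : ℝ := ∑ ℓ', a ℓ' * ω ℓ' * m ℓ' with hS
  have key : ∀ ℓ, HasDerivAt (fun t : ℝ => F k a ω β h (Function.update m ℓ t))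
      (ω ℓ * (-(a ℓ * S) - h + (1/β) *
        ((1/2) * Real.log ((1 + m ℓ)/(1 - m ℓ))))) (m ℓ) := by
    intro ℓ
    set C1 : ℝ := ∑ i ∈ Finset.univ.erase ℓ, a i * ω i * m i with hC1
    set C2 : ℝ := ∑ i ∈ Finset.univ.erase ℓ, ω i * m i with hC2
    set C3 : ℝ := ∑ i ∈ Finset.univ.erase ℓ, ω i * IC (m i) with hC3
    have hFrw : (fun t : ℝ => F k a ω β h (Function.update m ℓ t)) =
        fun t : ℝ => -(1/2) * (a ℓ * ω ℓ * t + C1)^2 - h * (ω ℓ * t + C2) +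
          (1/β) * (ω ℓ * IC t + C3) := by
      funext t
      simp only [F]
      rw [sum_update_eq m ℓ t (fun i x => a i * ω i * x),
        sum_update_eq m ℓ t (fun i x => ω i * x),
        sum_update_eq m ℓ t (fun i x => ω i * IC x)]
    rw [hFrw]
    have hSsplit : a ℓ * ω ℓ * m ℓ + C1 = S := by
      rw [hS, hC1, Finset.add_sum_erase _ (fun i => a i * ω i * m i) (Finset.mem_univ ℓ)]
    have d1 : HasDerivAt (fun t : ℝ => a ℓ * ω ℓ * t + C1) (a ℓ * ω ℓ) (m ℓ) := by
      simpa using ((hasDerivAt_id (m ℓ)).const_mul (a ℓ * ω ℓ)).add_const C1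
    have d2 : HasDerivAt (fun t : ℝ => ω ℓ * t + C2) (ω ℓ) (m ℓ) := by
      simpa using ((hasDerivAt_id (m ℓ)).const_mul (ω ℓ)).add_const C2
    have d3 : HasDerivAt (fun t : ℝ => ω ℓ * IC t + C3)
        (ω ℓ * ((1/2) * Real.log ((1 + m ℓ)/(1 - m ℓ)))) (m ℓ) :=
      ((IC_deriv (m ℓ) (hm ℓ).1 (hm ℓ).2).const_mul (ω ℓ)).add_const C3
    have dsq := (d1.pow 2).const_mul (-(1/2) : ℝ)
    have dfull := (dsq.sub (d2.const_mul h)).add (d3.const_mul (1/β))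
    refine dfull.congr_deriv (Eq.symm ?_)
    rw [← hSsplit]
    ring
  constructor
  · intro H ℓ
    have hzero := (key ℓ).unique (H ℓ)
    have hωℓ : ω ℓ ≠ 0 := ne_of_gt (hω ℓ).1
    have hL : (1/2) * Real.log ((1 + m ℓ)/(1 - m ℓ)) = β * (a ℓ * S + h) := by
      have h2 : -(a ℓ * S) - h + (1/β) * ((1/2) * Real.log ((1 + m ℓ)/(1 - m ℓ))) = 0 := by
        rcases mul_eq_zero.mp hzero with h' | h'
        · exact absurd h' hωℓ
        · exact h'
      field_simp at h2 ⊢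
      linarith
    rw [← hL, tanh_L (m ℓ) (hm ℓ).1 (hm ℓ).2]
  · intro H ℓ
    have hL : (1/2) * Real.log ((1 + m ℓ)/(1 - m ℓ)) = β * (a ℓ * S + h) := by
      rw [H ℓ]; exact L_tanh _
    have := key ℓ
    rw [hL] at this
    convert this using 1
    field_simp
    ring
end

section
/- For β > 1, the Curie-Weiss critical field h̄_c(β) = m(β) − (1/(2β)) log((1+m(β))/(1−m(β))) with m(β) = √(1 − 1/β) satisfies h̄_c(β) > 0, and the point −m(β) is a fixed point of T_{β,h̄_c}(m) = tanh(β(m + h̄_c(β))) with derivative 1 there, i.e., tanh(β(−m(β) + h̄_c(β))) = −m(β) and β(1 − m(β)²) = 1. -/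
open Real

/-- Key inequality: for `0 < m < 1`, `log ((1+m)/(1-m)) < 2*m/(1-m^2)`. -/
lemma log_lt_aux {m : ℝ} (h0 : 0 < m) (h1 : m < 1) :
    Real.log ((1 + m) / (1 - m)) < 2 * m / (1 - m ^ 2) := by
  set g : ℝ → ℝ := fun x => 2 * x / (1 - x ^ 2) - Real.log ((1 + x) / (1 - x)) with hg
  have key : StrictMonoOn g (Set.Ico (0:ℝ) 1) := by
    apply strictMonoOn_of_deriv_pos (convex_Ico 0 1)
    · -- continuity
      apply ContinuousOn.sub
      · exact ContinuousOn.div (by fun_prop) (by fun_prop)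
          (fun x hx => by nlinarith [hx.1, hx.2])
      · apply ContinuousOn.log
        · exact ContinuousOn.div (by fun_prop) (by fun_prop)
            (fun x hx => by nlinarith [hx.2])
        · intro x hx
          have h1x : (0:ℝ) < 1 - x := by linarith [hx.2]
          have h2x : (0:ℝ) < 1 + x := by linarith [hx.1]
          positivity
    · intro x hx
      rw [interior_Ico] at hx
      obtain ⟨hx0, hx1⟩ := hx
      have hden : (1 : ℝ) - x ^ 2 ≠ 0 := by nlinarith
      have h1x : (0 : ℝ) < 1 - x := by linarith
      have h1x' : (0 : ℝ) < 1 + x := by linarith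
      have hnum : HasDerivAt (fun y : ℝ => 2 * y) 2 x := by
        simpa using (hasDerivAt_id x).const_mul 2
      have hden' : HasDerivAt (fun y : ℝ => 1 - y ^ 2) (-(2 * x)) x := by
        simpa using ((hasDerivAt_pow 2 x).const_sub 1)
      have hd1 : HasDerivAt (fun y : ℝ => 2 * y / (1 - y ^ 2))
          ((2 * (1 - x ^ 2) - 2 * x * (-(2 * x))) / (1 - x ^ 2) ^ 2) x :=
        hnum.div hden' hden
      have hp : HasDerivAt (fun y : ℝ => 1 + y) 1 x := by
        simpa using (hasDerivAt_id x).const_add 1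
      have hq : HasDerivAt (fun y : ℝ => 1 - y) (-1) x := by
        simpa using (hasDerivAt_id x).const_sub 1
      have hd2 : HasDerivAt (fun y : ℝ => Real.log ((1 + y) / (1 - y)))
          ((1 * (1 - x) - (1 + x) * (-1)) / (1 - x) ^ 2 / ((1 + x) / (1 - x))) x := by
        apply HasDerivAt.log (hp.div hq h1x.ne')
        exact (div_pos h1x' h1x).ne'
      have hd : HasDerivAt g
          ((2 * (1 - x ^ 2) - 2 * x * (-(2 * x))) / (1 - x ^ 2) ^ 2
            - (1 * (1 - x) - (1 + x) * (-1)) / (1 - x) ^ 2 / ((1 + x) / (1 - x))) x :=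
        hd1.sub hd2
      rw [hd.deriv]
      have e1 : (2 * (1 - x ^ 2) - 2 * x * (-(2 * x))) / (1 - x ^ 2) ^ 2
          - (1 * (1 - x) - (1 + x) * (-1)) / (1 - x) ^ 2 / ((1 + x) / (1 - x))
          = 4 * x ^ 2 / (1 - x ^ 2) ^ 2 := by
        field_simp
        ring
      rw [e1]
      positivity
  have h00 : (0:ℝ) ∈ Set.Ico (0:ℝ) 1 := by constructor <;> norm_num
  have hm : m ∈ Set.Ico (0:ℝ) 1 := ⟨le_of_lt h0, h1⟩
  have := key h00 hm h0
  simp only [hg] at this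
  norm_num at this
  linarith [this]

theorem stmt_16 (β : ℝ) (hβ : 1 < β) :
    0 < Real.sqrt (1 - β⁻¹) -
      1 / (2 * β) * Real.log ((1 + Real.sqrt (1 - β⁻¹)) / (1 - Real.sqrt (1 - β⁻¹))) ∧
    Real.tanh (β * (-Real.sqrt (1 - β⁻¹) +
      (Real.sqrt (1 - β⁻¹) -
        1 / (2 * β) * Real.log ((1 + Real.sqrt (1 - β⁻¹)) / (1 - Real.sqrt (1 - β⁻¹))))))
      = -Real.sqrt (1 - β⁻¹) ∧
    β * (1 - Real.sqrt (1 - β⁻¹)^2) = 1 := by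
  have hβ0 : (0:ℝ) < β := by linarith
  set m := Real.sqrt (1 - β⁻¹) with hm
  have hinv : (0:ℝ) < β⁻¹ := by positivity
  have hinv1 : β⁻¹ < 1 := by
    rw [inv_lt_one_iff₀]; right; exact hβ
  have hmsq : m ^ 2 = 1 - β⁻¹ := Real.sq_sqrt (by linarith)
  have hm0 : 0 < m := Real.sqrt_pos.mpr (by linarith)
  have hm1 : m < 1 := by
    nlinarith [hmsq, Real.sqrt_nonneg (1 - β⁻¹)]
  have h3 : β * (1 - m ^ 2) = 1 := by
    rw [hmsq]; field_simp; ring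
  have hL := log_lt_aux hm0 hm1
  refine ⟨?_, ?_, h3⟩
  · have hβm : 2 * m / (1 - m ^ 2) = 2 * β * m := by
      rw [div_eq_iff (by nlinarith : (1:ℝ) - m ^ 2 ≠ 0)]; nlinarith [h3]
    rw [hβm] at hL
    have : 1 / (2 * β) * Real.log ((1 + m) / (1 - m)) < m := by
      rw [div_mul_eq_mul_div, one_mul, div_lt_iff₀ (by positivity)]
      linarith [hL]
    linarith
  · set L := Real.log ((1 + m) / (1 - m)) with hLdef
    have harg : β * (-m + (m - 1 / (2 * β) * L)) = -(L / 2) := by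
      field_simp; ring
    rw [harg]
    have hLpos : (0:ℝ) < (1 + m) / (1 - m) := by
      have : (0:ℝ) < 1 - m := by linarith
      positivity
    have hexp : Real.exp L = (1 + m) / (1 - m) := Real.exp_log hLpos
    rw [Real.tanh_eq_sinh_div_cosh, Real.sinh_eq, Real.cosh_eq]
    have he1 : Real.exp (-(L/2)) * Real.exp (L/2) = 1 := by
      rw [← Real.exp_add]; simp
    have he2 : Real.exp (L/2) ^ 2 = (1 + m) / (1 - m) := by
      rw [sq, ← Real.exp_add, add_halves, hexp]
    have hepos : 0 < Real.exp (L/2) := Real.exp_pos _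
    have h1m : (0:ℝ) < 1 - m := by linarith
    rw [neg_neg]
    rw [div_eq_iff (by positivity)]
    have key : Real.exp (-(L/2)) = 1 / Real.exp (L/2) := by
      field_simp [← he1]; exact he1
    rw [key]
    rw [div_sub' hepos.ne', div_add' _ _ _ hepos.ne']
    have he2' : (1 - m) * Real.exp (L/2) ^ 2 = 1 + m := by
      rw [he2]; field_simp
    field_simp
    nlinarith [he2', hepos]
end
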